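/- arXiv:2006.12535 — 6 statements merged into one kernel-verified Lean document; each statement's English description precedes it below -/
import Mathlib

section
/- Let p be a prime, n, m positive integers, F, G : F_{p^n} → F_{p^m}, and c ∈ F_{p^m}. Then for all b ∈ F_{p^m} and all x, u ∈ F_{p^n}: (i) ∑_{u ∈ F_{p^n}} cC_{F,G}(u,b)·ζ_p^{−Tr_n(u·x)} = W_F(x,b)·conj(W_G(x,b·c)), and (ii) cC_{F,G}(u,b) = p^{−n}·∑_{x ∈ F_{p^n}} W_F(x,b)·conj(W_G(x,b·c))·ζ_p^{Tr_n(u·x)}. -/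
open Finset

noncomputable section

/-- Finite fields `GaloisField p n` are finite; fix a `Fintype` instance. -/
noncomputable instance (p n : ℕ) [Fact p.Prime] : Fintype (GaloisField p n) :=
  Fintype.ofFinite _

/-- `ζ_q = exp(2πi/q)`. -/
noncomputable def zetaC (q : ℕ) : ℂ := Complex.exp (2 * Real.pi * Complex.I / q)

/-- `ζ_p^t` for `t ∈ F_p`, computed via the integer lift of `t`. -/
noncomputable def eChar (p : ℕ) (t : ZMod p) : ℂ := zetaC p ^ t.val

/-- The absolute trace `Tr_k : F_{p^k} → F_p`. -/
noncomputable def trAbs (p k : ℕ) [Fact p.Prime] (x : GaloisField p k) : ZMod p :=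
  Algebra.trace (ZMod p) (GaloisField p k) x

/-- The Walsh transform `W_F(a,b) = ∑_x ζ_p^{Tr_m(b·F(x)) − Tr_n(a·x)}`. -/
noncomputable def Walsh (p n m : ℕ) [Fact p.Prime] (F : GaloisField p n → GaloisField p m)
    (a : GaloisField p n) (b : GaloisField p m) : ℂ :=
  ∑ x : GaloisField p n, eChar p (trAbs p m (b * F x) - trAbs p n (a * x))

/-- The `c`-crosscorrelation `cC_{F,G}(u,b) = ∑_z ζ_p^{Tr_m(b(F(z+u) − c·G(z)))}`. -/
noncomputable def crossCorr (p n m : ℕ) [Fact p.Prime]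
    (F G : GaloisField p n → GaloisField p m) (c : GaloisField p m)
    (u : GaloisField p n) (b : GaloisField p m) : ℂ :=
  ∑ x : GaloisField p n, eChar p (trAbs p m (b * (F (x + u) - c * G x)))

/-- The `c`-autocorrelation `cC_F = cC_{F,F}`. -/
noncomputable def autoCorr (p n m : ℕ) [Fact p.Prime]
    (F : GaloisField p n → GaloisField p m) (c : GaloisField p m)
    (u : GaloisField p n) (b : GaloisField p m) : ℂ :=
  crossCorr p n m F F c u b

/-- `F` is perfect₁ `c`-nonlinear: `cC_F(u,b) = 0` for all `u ≠ 0`, `b ≠ 0`. -/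
def PerfectCNonlinear1 (p n m : ℕ) [Fact p.Prime]
    (F : GaloisField p n → GaloisField p m) (c : GaloisField p m) : Prop :=
  ∀ u : GaloisField p n, u ≠ 0 → ∀ b : GaloisField p m, b ≠ 0 →
    autoCorr p n m F c u b = 0

/-- `F` is strictly perfect₁ `c`-nonlinear: `cC_F(u,b) = 0` for all `u`, all `b ≠ 0`. -/
def StrictlyPerfectCNonlinear1 (p n m : ℕ) [Fact p.Prime]
    (F : GaloisField p n → GaloisField p m) (c : GaloisField p m) : Prop :=
  ∀ u : GaloisField p n, ∀ b : GaloisField p m, b ≠ 0 →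
    autoCorr p n m F c u b = 0

/-- `F` is `c`-differential bent₁:
`W_F(x,b)·conj(W_F(x,bc)) = cC_F(0,b)` for all `x` and all `b ≠ 0`. -/
def CDifferentialBent1 (p n m : ℕ) [Fact p.Prime]
    (F : GaloisField p n → GaloisField p m) (c : GaloisField p m) : Prop :=
  ∀ x : GaloisField p n, ∀ b : GaloisField p m, b ≠ 0 →
    Walsh p n m F x b * (starRingEnd ℂ) (Walsh p n m F x (b * c)) =
      autoCorr p n m F c 0 b

/-! Let `ψ` be the additive character `x ↦ ζ_p ^ Tr(x)` of a finite field. The crosscorrelation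
`cC_{F,G}(·, b)` is the correlation of the functions `z ↦ ψ(b F(z))` and `z ↦ ψ(bc G(z))` on
`F_{p^n}`, and the Walsh values are their Fourier coefficients with respect to the characters
`z ↦ ψ(x z)`. Hence (i) is the correlation theorem for finite abelian groups, and (ii) is Fourier
inversion, which rests on `∑_x ψ(a x) = 0` for `a ≠ 0`; this holds because the trace is onto. -/

open ComplexConjugate

namespace AddChar

theorem sum_correlation_mul_conj {A : Type*} [AddCommGroup A] [Fintype A] (χ : AddChar A ℂ)
    (f g : A → ℂ) :
    ∑ u, (∑ z, f (z + u) * conj (g z)) * conj (χ u) =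
      (∑ w, f w * conj (χ w)) * conj (∑ z, g z * conj (χ z)) := by
  have hχ (z u : A) : conj (χ (z + u)) * χ z = conj (χ u) := by
    rw [← map_neg_eq_conj, ← map_neg_eq_conj, ← map_add_eq_mul, neg_add_rev,
      neg_add_cancel_right]
  calc ∑ u, (∑ z, f (z + u) * conj (g z)) * conj (χ u)
      = ∑ z, ∑ u, f (z + u) * conj (χ (z + u)) * (conj (g z) * χ z) := by
        simp only [sum_mul]
        rw [sum_comm]
        refine sum_congr rfl fun z _ => sum_congr rfl fun u _ => ?_
        rw [← hχ z u]
        ring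
    _ = ∑ z, (∑ w, f w * conj (χ w)) * (conj (g z) * χ z) := by
        refine sum_congr rfl fun z _ => ?_
        rw [sum_mul]
        exact Fintype.sum_equiv (Equiv.addLeft z) _ _ fun _ => rfl
    _ = (∑ w, f w * conj (χ w)) * conj (∑ z, g z * conj (χ z)) := by
        simp only [map_sum, map_mul, Complex.conj_conj, mul_sum]

theorem sum_sum_mul_conj_mul_eq_card_mul {R : Type*} [CommRing R] [Fintype R]
    {ψ : AddChar R ℂ} (hψ : ψ.IsPrimitive) (h : R → ℂ) (u : R) :
    ∑ x, (∑ v, h v * conj (ψ (v * x))) * ψ (u * x) = Fintype.card R * h u := by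
  classical
  have hψ' (v x : R) : conj (ψ (v * x)) * ψ (u * x) = ψ (x * (u - v)) := by
    rw [← map_neg_eq_conj, ← map_add_eq_mul]
    ring_nf
  calc ∑ x, (∑ v, h v * conj (ψ (v * x))) * ψ (u * x)
      = ∑ v, h v * ∑ x, ψ (x * (u - v)) := by
        simp only [sum_mul, mul_sum, mul_assoc, hψ']
        exact sum_comm
    _ = ∑ v, h v * if u - v = 0 then (Fintype.card R : ℂ) else 0 := by
        simp only [sum_mulShift _ hψ, Nat.cast_ite, Nat.cast_zero]
    _ = Fintype.card R * h u := by
        simp [sub_eq_zero, eq_comm (a := u), mul_comm]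

end AddChar

theorem eChar_eq_stdAddChar (N : ℕ) [NeZero N] (t : ZMod N) :
    eChar N t = ZMod.stdAddChar t := by
  rw [eChar, zetaC, ← Complex.exp_nat_mul]
  conv_rhs => rw [← ZMod.natCast_zmod_val t, ← Int.cast_natCast, ZMod.stdAddChar_coe]
  push_cast
  ring_nf

section TraceChar

variable (p : ℕ) [Fact p.Prime] (K : Type*) [Field K] [Fintype K] [Algebra (ZMod p) K]

def traceChar : AddChar K ℂ :=
  ZMod.stdAddChar.compAddMonoidHom (Algebra.trace (ZMod p) K).toAddMonoidHom

theorem isPrimitive_traceChar : (traceChar p K).IsPrimitive := by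
  refine AddChar.IsPrimitive.of_ne_one (AddChar.ne_one_iff.2 ?_)
  obtain ⟨a, ha⟩ := Algebra.trace_surjective (ZMod p) K 1
  refine ⟨a, fun h => one_ne_zero (ZMod.injective_stdAddChar (N := p) ?_)⟩
  rw [AddChar.map_zero_eq_one, ← ha]
  exact h

end TraceChar

section GaloisField

variable {p : ℕ} [Fact p.Prime]

theorem eChar_trAbs {k : ℕ} (x : GaloisField p k) :
    eChar p (trAbs p k x) = traceChar p (GaloisField p k) x :=
  eChar_eq_stdAddChar p _

theorem eChar_trAbs_sub_trAbs {k l : ℕ} (x : GaloisField p k) (y : GaloisField p l) :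
    eChar p (trAbs p k x - trAbs p l y) =
      traceChar p (GaloisField p k) x * conj (traceChar p (GaloisField p l) y) := by
  rw [sub_eq_add_neg, eChar_eq_stdAddChar, AddChar.map_add_eq_mul, AddChar.map_neg_eq_conj,
    ← eChar_eq_stdAddChar, ← eChar_eq_stdAddChar, eChar_trAbs, eChar_trAbs]

theorem eChar_neg_trAbs {k : ℕ} (x : GaloisField p k) :
    eChar p (-trAbs p k x) = conj (traceChar p (GaloisField p k) x) := by
  rw [eChar_eq_stdAddChar, AddChar.map_neg_eq_conj, ← eChar_eq_stdAddChar, eChar_trAbs]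

variable {n m : ℕ}

theorem walsh_eq_sum (F : GaloisField p n → GaloisField p m) (a : GaloisField p n)
    (b : GaloisField p m) :
    Walsh p n m F a b =
      ∑ x, traceChar p _ (b * F x) * conj (traceChar p (GaloisField p n) (a * x)) :=
  sum_congr rfl fun _ _ => eChar_trAbs_sub_trAbs _ _

theorem crossCorr_eq_sum (F G : GaloisField p n → GaloisField p m) (c : GaloisField p m)
    (u : GaloisField p n) (b : GaloisField p m) :
    crossCorr p n m F G c u b =
      ∑ z, traceChar p _ (b * F (z + u)) * conj (traceChar p _ (b * c * G z)) := by
  refine sum_congr rfl fun z _ => ?_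
  rw [mul_sub, ← mul_assoc, trAbs, map_sub]
  exact eChar_trAbs_sub_trAbs _ _

theorem sum_crossCorr_mul_eChar_neg (F G : GaloisField p n → GaloisField p m)
    (c b : GaloisField p m) (x : GaloisField p n) :
    ∑ u, crossCorr p n m F G c u b * eChar p (-trAbs p n (u * x)) =
      Walsh p n m F x b * conj (Walsh p n m G x (b * c)) := by
  simp only [crossCorr_eq_sum, walsh_eq_sum, eChar_neg_trAbs, mul_comm _ x]
  simpa only [AddChar.mulShift_apply] using
    AddChar.sum_correlation_mul_conj ((traceChar p _).mulShift x)
      (fun w => traceChar p _ (b * F w)) (fun z => traceChar p _ (b * c * G z))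

theorem crossCorr_eq_inv_mul_sum (hn : n ≠ 0) (F G : GaloisField p n → GaloisField p m)
    (c b : GaloisField p m) (u : GaloisField p n) :
    crossCorr p n m F G c u b =
      ((p : ℂ) ^ n)⁻¹ * ∑ x, Walsh p n m F x b * conj (Walsh p n m G x (b * c)) *
        eChar p (trAbs p n (u * x)) := by
  have hcard : (Fintype.card (GaloisField p n) : ℂ) = p ^ n := by
    rw [← Nat.card_eq_fintype_card, GaloisField.card p n hn]
    push_cast
    rfl
  have hp : (p : ℂ) ^ n ≠ 0 := pow_ne_zero _ (Nat.cast_ne_zero.2 (NeZero.ne p))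
  simp only [← sum_crossCorr_mul_eChar_neg, eChar_neg_trAbs, eChar_trAbs]
  rw [AddChar.sum_sum_mul_conj_mul_eq_card_mul (isPrimitive_traceChar p _), hcard,
    inv_mul_cancel_left₀ hp]

end GaloisField

theorem statement_0_general (p n m : ℕ) [Fact p.Prime] (hn : 0 < n)
    (F G : GaloisField p n → GaloisField p m) (c : GaloisField p m)
    (b : GaloisField p m) (x u : GaloisField p n) :
    (∑ u' : GaloisField p n,
        crossCorr p n m F G c u' b * eChar p (-(trAbs p n (u' * x))) =
      Walsh p n m F x b * (starRingEnd ℂ) (Walsh p n m G x (b * c))) ∧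
    crossCorr p n m F G c u b =
      ((p : ℂ) ^ n)⁻¹ * ∑ x' : GaloisField p n,
        Walsh p n m F x' b * (starRingEnd ℂ) (Walsh p n m G x' (b * c)) *
          eChar p (trAbs p n (u * x')) :=
  ⟨sum_crossCorr_mul_eChar_neg F G c b x, crossCorr_eq_inv_mul_sum hn.ne' F G c b u⟩

theorem statement_0 (p n m : ℕ) [Fact p.Prime] (hn : 0 < n) (hm : 0 < m)
    (F G : GaloisField p n → GaloisField p m) (c : GaloisField p m)
    (b : GaloisField p m) (x u : GaloisField p n) :
    (∑ u' : GaloisField p n,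
        crossCorr p n m F G c u' b * eChar p (-(trAbs p n (u' * x))) =
      Walsh p n m F x b * (starRingEnd ℂ) (Walsh p n m G x (b * c))) ∧
    crossCorr p n m F G c u b =
      ((p : ℂ) ^ n)⁻¹ * ∑ x' : GaloisField p n,
        Walsh p n m F x' b * (starRingEnd ℂ) (Walsh p n m G x' (b * c)) *
          eChar p (trAbs p n (u * x')) :=
  statement_0_general p n m hn F G c b x u
end
end

section
/- Let n, k be positive integers with n/gcd(n,k) odd, and let F(x) = x^{p^k+1} on F_{p^n}. If p is an odd prime, then F is not 0-differential bent₁. If p = 2, then F is 0-differential bent₁. -/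
open Finset

noncomputable section

lemma zetaC_pow_eq_one {p : ℕ} (hp : p ≠ 0) : zetaC p ^ p = 1 :=
  (Complex.isPrimitiveRoot_exp p hp).pow_eq_one

lemma eChar_zero (p : ℕ) [NeZero p] : eChar p 0 = 1 := by
  simp [eChar]

lemma eChar_add (p : ℕ) [NeZero p] (s t : ZMod p) :
    eChar p (s + t) = eChar p s * eChar p t := by
  have hζ : zetaC p ^ p = 1 := zetaC_pow_eq_one (NeZero.ne p)
  rw [eChar, eChar, eChar, ZMod.val_add, ← pow_eq_pow_mod _ hζ, pow_add]

lemma trAbs_zero (p k : ℕ) [Fact p.Prime] : trAbs p k 0 = 0 := by simp [trAbs]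

lemma trAbs_neg (p k : ℕ) [Fact p.Prime] (x : GaloisField p k) :
    trAbs p k (-x) = - trAbs p k x := by simp [trAbs]

lemma trAbs_add (p k : ℕ) [Fact p.Prime] (x y : GaloisField p k) :
    trAbs p k (x + y) = trAbs p k x + trAbs p k y := by simp [trAbs]

open scoped Classical in
lemma charSum (p n : ℕ) [Fact p.Prime] (hn : 0 < n) (t : GaloisField p n) :
    ∑ b : GaloisField p n, eChar p (trAbs p n (t * b)) =
      if t = 0 then ((p : ℂ) ^ n) else 0 := by
  have hp1 : 1 < p := (Fact.out (p := p.Prime)).one_lt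
  haveI : NeZero p := ⟨by omega⟩
  haveI : Fact (1 < p) := ⟨hp1⟩
  have hζ : zetaC p ^ p = 1 := zetaC_pow_eq_one (by omega)
  split_ifs with ht
  · subst ht
    simp only [zero_mul, trAbs_zero, eChar_zero]
    rw [Finset.sum_const, Finset.card_univ, ← Nat.card_eq_fintype_card,
      GaloisField.card p n hn.ne', nsmul_eq_mul]
    push_cast; ring
  · set f : GaloisField p n →+ ZMod p :=
      ((Algebra.trace (ZMod p) (GaloisField p n)).comp (LinearMap.mulLeft (ZMod p) t)).toAddMonoidHom with hf
    set ψ : AddChar (GaloisField p n) ℂ := (AddChar.zmodChar p hζ).compAddMonoidHom f with hψ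
    have hψapp : ∀ b, ψ b = eChar p (trAbs p n (t * b)) := by
      intro b
      simp [hψ, hf, AddChar.zmodChar_apply, eChar, trAbs]
    rw [show (∑ b, eChar p (trAbs p n (t * b))) = ∑ b, ψ b from
      Finset.sum_congr rfl fun b _ => (hψapp b).symm]
    apply AddChar.sum_eq_zero_iff_ne_zero.mpr
    rw [AddChar.ne_zero_iff]
    obtain ⟨y, hy⟩ := Algebra.trace_surjective (ZMod p) (GaloisField p n) 1
    refine ⟨t⁻¹ * y, ?_⟩
    have htr : trAbs p n (t * (t⁻¹ * y)) = 1 := by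
      rw [trAbs, ← mul_assoc, mul_inv_cancel₀ ht, one_mul]; exact hy
    rw [hψapp, htr, eChar, ZMod.val_one, pow_one]
    exact (Complex.isPrimitiveRoot_exp p (by omega)).ne_one hp1

lemma pow_pow_stab {M : Type*} [Monoid M] {u : M} {e : ℕ} (h : u ^ e = u) (q : ℕ) :
    u ^ e ^ q = u := by
  induction q with
  | zero => simp
  | succ q ih => rw [pow_succ, pow_mul, ih, h]

lemma gcd_stab {M : Type*} [Monoid M] (u : M) (c : ℕ) :
    ∀ a b : ℕ, u ^ c ^ a = u → u ^ c ^ b = u → u ^ c ^ Nat.gcd a b = u := by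
  intro a b
  induction a, b using Nat.gcd.induction with
  | H0 b => intro _ hb; simpa using hb
  | H1 a b h0 ih =>
    intro hA hB
    have hmod : u ^ c ^ (b % a) = u := by
      calc u ^ c ^ (b % a)
          = (u ^ (c ^ a) ^ (b / a)) ^ c ^ (b % a) := by rw [pow_pow_stab hA]
        _ = u ^ ((c ^ a) ^ (b / a) * c ^ (b % a)) := by rw [pow_mul]
        _ = u ^ c ^ b := by rw [← pow_mul c, ← pow_add, Nat.div_add_mod]
        _ = u := hB
    rw [Nat.gcd_rec]
    exact ih hmod hA

lemma gcd_two_mul {n k : ℕ} (hn : 0 < n) (hk : 0 < k) (hodd : Odd (n / Nat.gcd n k)) :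
    Nat.gcd (2 * k) n = Nat.gcd n k := by
  set d := Nat.gcd n k with hd
  have hd0 : 0 < d := Nat.gcd_pos_of_pos_left k hn
  have h1 : d ∣ Nat.gcd (2 * k) n :=
    Nat.dvd_gcd ((Nat.gcd_dvd_right n k).mul_left 2) (Nat.gcd_dvd_left n k)
  have h2 : Nat.gcd (2 * k) n ∣ d * 2 := by
    have h := Nat.dvd_gcd (Nat.gcd_dvd_left (2 * k) n) ((Nat.gcd_dvd_right (2 * k) n).mul_left 2)
    rw [Nat.gcd_mul_left] at h
    have heq : 2 * Nat.gcd k n = d * 2 := by rw [hd, Nat.gcd_comm n k]; ring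
    exact heq ▸ h
  obtain ⟨e, he⟩ := h1
  have he2 : e ∣ 2 := (Nat.mul_dvd_mul_iff_left hd0).mp (he ▸ h2)
  rcases (Nat.dvd_prime Nat.prime_two).mp he2 with h | h
  · rw [he, h, mul_one]
  · exfalso
    have h2d : d * 2 ∣ n := by
      rw [← h, ← he]; exact Nat.gcd_dvd_right (2 * k) n
    obtain ⟨m, hm⟩ := h2d
    have : n / d = 2 * m := by
      rw [hm, mul_assoc, Nat.mul_div_cancel_left _ hd0]
    rw [this] at hodd
    exact (Nat.not_odd_iff_even.mpr ⟨m, by ring⟩) hodd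

lemma F2_injective (n k : ℕ) [Fact (Nat.Prime 2)] (hn : 0 < n) (hk : 0 < k)
    (hodd : Odd (n / Nat.gcd n k)) :
    Function.Injective (fun x : GaloisField 2 n => x ^ (2 ^ k + 1)) := by
  intro x y h
  simp only at h
  by_cases hy : y = 0
  · subst hy
    rw [zero_pow (by positivity)] at h
    rw [pow_eq_zero_iff (by positivity : 2 ^ k + 1 ≠ 0)] at h
    exact h
  by_cases hx : x = 0
  · subst hx
    rw [zero_pow (by positivity)] at h
    rw [eq_comm, pow_eq_zero_iff (by positivity : 2 ^ k + 1 ≠ 0)] at h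
    exact absurd h hy
  set u : GaloisField 2 n := x / y with hudef
  have hu0 : u ≠ 0 := div_ne_zero hx hy
  have hu : u ^ (2 ^ k + 1) = 1 := by
    rw [hudef, div_pow, h, div_self (pow_ne_zero _ hy)]
  rw [pow_succ] at hu
  have hinv : u ^ 2 ^ k = u⁻¹ := eq_inv_of_mul_eq_one_left hu
  have h2k : u ^ 2 ^ (2 * k) = u := by
    rw [two_mul, pow_add, pow_mul, hinv, inv_pow, hinv, inv_inv]
  have hncard : u ^ 2 ^ n = u := by
    have hc := FiniteField.pow_card u
    rwa [← Nat.card_eq_fintype_card, GaloisField.card 2 n hn.ne'] at hc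
  have hgcd : u ^ 2 ^ Nat.gcd (2 * k) n = u := gcd_stab u 2 _ _ h2k hncard
  rw [gcd_two_mul hn hk hodd] at hgcd
  have hk' : u ^ 2 ^ k = u := by
    obtain ⟨m, hm⟩ := Nat.gcd_dvd_right n k
    rw [hm, pow_mul]
    exact pow_pow_stab hgcd m
  have huu : u = u⁻¹ := hk'.symm.trans hinv
  have hsq : u * u = 1 := by
    nth_rewrite 2 [huu]
    exact mul_inv_cancel₀ hu0
  have hfac : (u - 1) * (u + 1) = 0 := by linear_combination hsq
  have hone : u = 1 := by
    rcases mul_eq_zero.mp hfac with h1 | h1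
    · exact sub_eq_zero.mp h1
    · have : u = -1 := eq_neg_of_add_eq_zero_left h1
      rw [this, CharTwo.neg_eq]
  rw [hudef] at hone
  exact (div_eq_one_iff_eq hy).mp hone

theorem statement_8 (p n k : ℕ) [Fact p.Prime] (hn : 0 < n) (hk : 0 < k)
    (hodd : Odd (n / Nat.gcd n k)) :
    (p ≠ 2 → ¬ CDifferentialBent1 p n n (fun x => x ^ (p ^ k + 1)) 0) ∧
    (p = 2 → CDifferentialBent1 p n n (fun x => x ^ (p ^ k + 1)) 0) := by
  classical
  constructor
  · -- odd p case
    intro hp2 H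
    have hp := Fact.out (p := p.Prime)
    have h2 : 2 < p := lt_of_le_of_ne hp.two_le (Ne.symm hp2)
    haveI : NeZero p := ⟨by omega⟩
    haveI : Fact (2 < p) := ⟨h2⟩
    set m := p ^ k + 1 with hm
    -- Step 1: all nontrivial component sums vanish
    have hS : ∀ b : GaloisField p n, b ≠ 0 →
        (∑ z : GaloisField p n, eChar p (trAbs p n (b * z ^ m))) = 0 := by
      intro b hb
      have hH := H 1 b hb
      rw [mul_zero] at hH
      have hW0 : Walsh p n n (fun x => x ^ m) 1 0 = 0 := by
        rw [Walsh]
        have hterm : ∀ z : GaloisField p n,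
            trAbs p n (0 * z ^ m) - trAbs p n (1 * z) = trAbs p n ((-1) * z) := by
          intro z
          rw [zero_mul, trAbs_zero, one_mul, zero_sub, neg_one_mul, trAbs_neg]
        simp only [hterm]
        rw [charSum p n hn (-1), if_neg (neg_ne_zero.mpr one_ne_zero)]
      rw [hW0, map_zero, mul_zero] at hH
      have hA : autoCorr p n n (fun x => x ^ m) 0 0 b = ∑ z : GaloisField p n,
          eChar p (trAbs p n (b * z ^ m)) := by
        rw [autoCorr, crossCorr]
        apply Finset.sum_congr rfl
        intro z _
        congr 1
        rw [add_zero, zero_mul, sub_zero]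
      exact hA.symm.trans hH.symm
    -- Step 2: double counting
    set C : ℕ := (Finset.univ.filter (fun z : GaloisField p n => z ^ m = 1)).card with hC
    have hT1 : (∑ b : GaloisField p n, ∑ z : GaloisField p n,
        eChar p (trAbs p n (b * (z ^ m - 1)))) = (p : ℂ) ^ n := by
      have hterm : ∀ b : GaloisField p n,
          (∑ z : GaloisField p n, eChar p (trAbs p n (b * (z ^ m - 1)))) =
            if b = 0 then (p : ℂ) ^ n else 0 := by
        intro b
        split_ifs with hb
        · subst hb
          simp only [zero_mul, trAbs_zero, eChar_zero]
          rw [Finset.sum_const, Finset.card_univ, ← Nat.card_eq_fintype_card,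
            GaloisField.card p n hn.ne', nsmul_eq_mul]
          push_cast; ring
        · have hsplit : ∀ z : GaloisField p n,
              eChar p (trAbs p n (b * (z ^ m - 1))) =
                eChar p (trAbs p n (b * z ^ m)) * eChar p (trAbs p n (-b)) := by
            intro z
            rw [← eChar_add, ← trAbs_add]
            congr 2
            ring
          simp only [hsplit]
          rw [← Finset.sum_mul, hS b hb, zero_mul]
      rw [Finset.sum_congr rfl fun b _ => hterm b]
      simp
    have hT2 : (∑ b : GaloisField p n, ∑ z : GaloisField p n,
        eChar p (trAbs p n (b * (z ^ m - 1)))) = (C : ℂ) * (p : ℂ) ^ n := by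
      rw [Finset.sum_comm]
      have hz : ∀ z : GaloisField p n,
          (∑ b : GaloisField p n, eChar p (trAbs p n (b * (z ^ m - 1)))) =
            if z ^ m = 1 then (p : ℂ) ^ n else 0 := by
        intro z
        have hcm : ∀ b : GaloisField p n, b * (z ^ m - 1) = (z ^ m - 1) * b :=
          fun b => mul_comm _ _
        simp only [hcm]
        rw [charSum p n hn (z ^ m - 1)]
        simp [sub_eq_zero]
      rw [Finset.sum_congr rfl fun z _ => hz z]
      rw [Finset.sum_ite, Finset.sum_const, Finset.sum_const_zero, add_zero, nsmul_eq_mul, hC]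
    -- C ≥ 2
    have hmemneg : (-1 : GaloisField p n) ^ m = 1 := by
      have hev : Even m := Odd.add_one ((hp.odd_of_ne_two hp2).pow)
      exact hev.neg_one_pow
    have hne : (-1 : GaloisField p n) ≠ 1 := CharP.neg_one_ne_one _ p
    have hC2 : 2 ≤ C := by
      have hsub : ({1, -1} : Finset (GaloisField p n)) ⊆
          Finset.univ.filter (fun z : GaloisField p n => z ^ m = 1) := by
        intro z hz
        rcases Finset.mem_insert.mp hz with h1 | h1
        · subst h1; exact Finset.mem_filter.mpr ⟨Finset.mem_univ _, one_pow m⟩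
        · rw [Finset.mem_singleton] at h1
          subst h1; exact Finset.mem_filter.mpr ⟨Finset.mem_univ _, hmemneg⟩
      calc 2 = ({1, -1} : Finset (GaloisField p n)).card := by
              rw [Finset.card_pair (Ne.symm hne)]
        _ ≤ C := Finset.card_le_card hsub
    have hpn : ((p : ℂ)) ^ n ≠ 0 := pow_ne_zero _ (Nat.cast_ne_zero.mpr (by omega))
    have hCone : (C : ℂ) = 1 := by
      have heq : (C : ℂ) * (p : ℂ) ^ n = 1 * (p : ℂ) ^ n := by
        rw [one_mul, ← hT2, hT1]
      exact mul_right_cancel₀ hpn heq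
    have : C = 1 := by exact_mod_cast hCone
    omega
  · -- p = 2 case
    intro hp2
    subst hp2
    intro x b hb
    have hbij : Function.Bijective (fun x : GaloisField 2 n => x ^ (2 ^ k + 1)) :=
      Finite.injective_iff_bijective.mp (F2_injective n k hn hk hodd)
    have hS : ∀ b : GaloisField 2 n, b ≠ 0 →
        (∑ z : GaloisField 2 n, eChar 2 (trAbs 2 n (b * z ^ (2 ^ k + 1)))) = 0 := by
      intro b hb
      calc (∑ z : GaloisField 2 n, eChar 2 (trAbs 2 n (b * z ^ (2 ^ k + 1))))
          = ∑ y : GaloisField 2 n, eChar 2 (trAbs 2 n (b * y)) :=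
            Function.Bijective.sum_comp hbij (fun y => eChar 2 (trAbs 2 n (b * y)))
        _ = 0 := by rw [charSum 2 n hn b, if_neg hb]
    have hA : autoCorr 2 n n (fun x => x ^ (2 ^ k + 1)) 0 0 b = 0 := by
      rw [autoCorr, crossCorr]
      have : ∀ z : GaloisField 2 n,
          eChar 2 (trAbs 2 n (b * ((z + 0) ^ (2 ^ k + 1) - 0 * z ^ (2 ^ k + 1)))) =
            eChar 2 (trAbs 2 n (b * z ^ (2 ^ k + 1))) := by
        intro z; rw [add_zero, zero_mul, sub_zero]
      rw [Finset.sum_congr rfl fun z _ => this z]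
      exact hS b hb
    rw [mul_zero, hA]
    by_cases hx : x = 0
    · subst hx
      have hW : Walsh 2 n n (fun x => x ^ (2 ^ k + 1)) 0 b = 0 := by
        rw [Walsh]
        have : ∀ z : GaloisField 2 n,
            eChar 2 (trAbs 2 n (b * z ^ (2 ^ k + 1)) - trAbs 2 n (0 * z)) =
              eChar 2 (trAbs 2 n (b * z ^ (2 ^ k + 1))) := by
          intro z; rw [zero_mul, trAbs_zero, sub_zero]
        rw [Finset.sum_congr rfl fun z _ => this z]
        exact hS b hb
      rw [hW, zero_mul]
    · have hW : Walsh 2 n n (fun x => x ^ (2 ^ k + 1)) x 0 = 0 := by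
        rw [Walsh]
        have : ∀ z : GaloisField 2 n,
            eChar 2 (trAbs 2 n (0 * z ^ (2 ^ k + 1)) - trAbs 2 n (x * z)) =
              eChar 2 (trAbs 2 n (x * z)) := by
          intro z
          rw [zero_mul, trAbs_zero, zero_sub, CharTwo.neg_eq]
        rw [Finset.sum_congr rfl fun z _ => this z]
        rw [charSum 2 n hn x, if_neg hx]
      rw [hW, map_zero, mul_zero]
end
end

section
/- Let k ≥ 2 be a divisor of the positive integer n such that n/k is odd, regard F_{2^k} as a subfield of F_{2^n}, and let a ∈ F_{2^k} with a ∉ F_2 (so a ≠ 0 and a ≠ 1). Define F : F_{2^n} → F_{2^n} by F(x) = x·(Tr_{F_{2^n}/F_{2^k}}(x) + a·x). Then for every c ∈ F_{2^k} with c ≠ 1 and every u ∈ F_{2^n}, the map x ↦ F(x+u) + c·F(x) is a bijection of F_{2^n}; that is, F is PcN with respect to every c ∈ F_{2^k}\{1}. -/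
open Finset

noncomputable section

/-- The relative trace `Tr_{F_{2^n}/F_{2^k}}(x) = ∑_{i=0}^{n/k−1} x^{2^{ki}}`,
viewed as an element of `F_{2^n}` (its values lie in the subfield `F_{2^k}`). -/
noncomputable def relTr (n k : ℕ) (x : GaloisField 2 n) : GaloisField 2 n :=
  ∑ i ∈ Finset.range (n / k), x ^ 2 ^ (k * i)

namespace Aux12

variable {n k : ℕ}

local notation "K" => GaloisField 2 n

lemma pow_card_self (hn : n ≠ 0) (w : K) : w ^ 2 ^ n = w := by
  have hc : Fintype.card K = 2 ^ n := by
    rw [← Nat.card_eq_fintype_card, GaloisField.card 2 n hn]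
  calc w ^ 2 ^ n = w ^ Fintype.card K := by rw [hc]
    _ = w := FiniteField.pow_card w

lemma fix_pow_mul {w : K} (hw : w ^ 2 ^ k = w) (i : ℕ) : w ^ 2 ^ (k * i) = w := by
  induction i with
  | zero => simp
  | succ i ih =>
    have : k * (i + 1) = k * i + k := by ring
    rw [this, pow_add, pow_mul, ih, hw]

lemma T_add (w₁ w₂ : K) : relTr n k (w₁ + w₂) = relTr n k w₁ + relTr n k w₂ := by
  unfold relTr
  rw [← Finset.sum_add_distrib]
  exact Finset.sum_congr rfl fun i _ => add_pow_char_pow ..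

lemma T_smul {lam : K} (hl : lam ^ 2 ^ k = lam) (w : K) :
    relTr n k (lam * w) = lam * relTr n k w := by
  unfold relTr
  rw [Finset.mul_sum]
  exact Finset.sum_congr rfl fun i _ => by rw [mul_pow, fix_pow_mul hl]

lemma T_sq (w : K) : relTr n k (w ^ 2) = (relTr n k w) ^ 2 := by
  unfold relTr
  rw [sum_pow_char]
  exact Finset.sum_congr rfl fun i _ => by
    rw [← pow_mul, ← pow_mul, mul_comm 2 (2 ^ (k * i))]

lemma T_fix (hn : n ≠ 0) (hkn : k ∣ n) (w : K) :
    (relTr n k w) ^ 2 ^ k = relTr n k w := by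
  unfold relTr
  rw [sum_pow_char_pow]
  have hterm : ∀ i : ℕ, (w ^ 2 ^ (k * i)) ^ 2 ^ k = w ^ 2 ^ (k * (i + 1)) := by
    intro i
    rw [← pow_mul, ← pow_add, Nat.mul_add, Nat.mul_one]
  simp only [hterm]
  set m := n / k with hm
  have hlast : w ^ 2 ^ (k * m) = w ^ 2 ^ (k * 0) := by
    rw [hm, Nat.mul_div_cancel' hkn, pow_card_self hn, Nat.mul_zero, pow_zero, pow_one]
  have h1 : ∑ i ∈ Finset.range (m + 1), w ^ 2 ^ (k * i)
      = (∑ i ∈ Finset.range m, w ^ 2 ^ (k * (i + 1))) + w ^ 2 ^ (k * 0) :=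
    Finset.sum_range_succ' _ m
  have h2 : ∑ i ∈ Finset.range (m + 1), w ^ 2 ^ (k * i)
      = (∑ i ∈ Finset.range m, w ^ 2 ^ (k * i)) + w ^ 2 ^ (k * m) :=
    Finset.sum_range_succ _ m
  have h12 := h1.symm.trans h2
  rw [hlast] at h12
  exact add_right_cancel h12

lemma T_id (hodd : Odd (n / k)) (htwo : (2 : GaloisField 2 n) = 0) {lam : K}
    (hl : lam ^ 2 ^ k = lam) : relTr n k lam = lam := by
  unfold relTr
  have : ∀ i ∈ Finset.range (n / k), lam ^ 2 ^ (k * i) = lam := fun i _ => fix_pow_mul hl i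
  rw [Finset.sum_congr rfl this, Finset.sum_const, nsmul_eq_mul]
  obtain ⟨t, ht⟩ := hodd
  rw [Finset.card_range, ht]
  push_cast
  rw [htwo]
  ring

end Aux12

theorem statement_12 (n k : ℕ) (hk : 2 ≤ k) (hkn : k ∣ n) (hodd : Odd (n / k))
    (a : GaloisField 2 n) (haSub : a ^ 2 ^ k = a) (ha0 : a ≠ 0) (ha1 : a ≠ 1)
    (F : GaloisField 2 n → GaloisField 2 n)
    (hF : ∀ x, F x = x * (relTr n k x + a * x))
    (c : GaloisField 2 n) (hcSub : c ^ 2 ^ k = c) (hc1 : c ≠ 1) :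
    ∀ u : GaloisField 2 n,
      Function.Bijective fun x => F (x + u) + c * F x := by
  intro u
  have hm0 : n / k ≠ 0 := by
    intro h; rw [h] at hodd; simp [Nat.odd_iff] at hodd
  have hn : n ≠ 0 := by
    intro h; apply hm0; rw [h]; simp
  have htwo : (2 : GaloisField 2 n) = 0 := by
    have h := CharP.cast_eq_zero (GaloisField 2 n) 2
    exact_mod_cast h
  rw [← Finite.injective_iff_bijective]
  intro x y hxy
  simp only at hxy
  set s := relTr n k x with hs
  set t := relTr n k y with ht
  set v := relTr n k u with hv
  have hsxu : relTr n k (x + u) = s + v := Aux12.T_add x u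
  have hsyu : relTr n k (y + u) = t + v := Aux12.T_add y u
  rw [hF (x + u), hF x, hF (y + u), hF y, hsxu, hsyu] at hxy
  -- fixedness facts
  have hsf : s ^ 2 ^ k = s := Aux12.T_fix hn hkn x
  have htf : t ^ 2 ^ k = t := Aux12.T_fix hn hkn y
  have hvf : v ^ 2 ^ k = v := Aux12.T_fix hn hkn u
  have honef : (1 : GaloisField 2 n) ^ 2 ^ k = 1 := one_pow _
  have fadd : ∀ w₁ w₂ : GaloisField 2 n, w₁ ^ 2 ^ k = w₁ → w₂ ^ 2 ^ k = w₂ → (w₁ + w₂) ^ 2 ^ k = w₁ + w₂ := by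
    intro w₁ w₂ h1 h2; rw [add_pow_char_pow, h1, h2]
  have fmul : ∀ w₁ w₂ : GaloisField 2 n, w₁ ^ 2 ^ k = w₁ → w₂ ^ 2 ^ k = w₂ → (w₁ * w₂) ^ 2 ^ k = w₁ * w₂ := by
    intro w₁ w₂ h1 h2; rw [mul_pow, h1, h2]
  set d : GaloisField 2 n := 1 + c with hd
  have hdf : d ^ 2 ^ k = d := fadd _ _ honef hcSub
  have hd0 : d ≠ 0 := by
    intro h
    apply hc1
    have : c = -1 := by linear_combination h
    rw [this]
    linear_combination -htwo
  have ha1' : (1 : GaloisField 2 n) + a ≠ 0 := by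
    intro h
    apply ha1
    have : a = -1 := by linear_combination h
    rw [this]
    linear_combination -htwo
  -- step 1 : the key quadratic relation e2
  have e2 : (d * (s + t)) * y + (d * t) * (x + y) + (d * (s + t)) * (x + y)
      + (d * a) * ((x + y) ^ 2) + v * (x + y) + (s + t) * u = 0 := by
    rw [hd]
    linear_combination hxy + (u*t + y*v + 2*y*t + y*s + 2*y*c*t + y*c*s + y*u*a
      + y^2*a + y^2*a*c + x*t + x*c*t - x*u*a + x*y*a + x*y*a*c) * htwo
  -- step 2 : apply the trace to e2
  have hT0 : relTr n k (0 : GaloisField 2 n) = 0 := by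
    unfold relTr
    refine Finset.sum_eq_zero fun i _ => ?_
    exact zero_pow (by positivity)
  have h3' : relTr n k ((d * (s + t)) * y + (d * t) * (x + y) + (d * (s + t)) * (x + y)
      + (d * a) * ((x + y) ^ 2) + v * (x + y) + (s + t) * u) = 0 := by
    rw [e2, hT0]
  have hTxy : relTr n k (x + y) = s + t := Aux12.T_add x y
  rw [Aux12.T_add, Aux12.T_add, Aux12.T_add, Aux12.T_add, Aux12.T_add,
    Aux12.T_smul (fmul _ _ hdf (fadd _ _ hsf htf)),
    Aux12.T_smul (fmul _ _ hdf htf),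
    Aux12.T_smul (fmul _ _ hdf (fadd _ _ hsf htf)),
    Aux12.T_smul (fmul _ _ hdf haSub),
    Aux12.T_smul hvf,
    Aux12.T_smul (fadd _ _ hsf htf),
    Aux12.T_sq, hTxy, ← ht, ← hv] at h3'
  -- h3' : d(s+t)t + dt(s+t) + d(s+t)(s+t) + da(s+t)^2 + v(s+t) + (s+t)v = 0
  have h4 : d * (1 + a) * (s + t) ^ 2 = 0 := by
    rw [hd]
    linear_combination h3' + (-(t*v) - t^2 - s*v - s*t - c*t^2 - c*s*t) * htwo
  have hst : s + t = 0 := by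
    have h5 := (mul_eq_zero.mp h4).resolve_left (by
      intro h; exact (mul_ne_zero hd0 ha1') h)
    exact pow_eq_zero_iff (by norm_num) |>.mp h5
  -- step 3 : factor out z = x + y
  have h5 : (x + y) * ((d * a) * (x + y) + (d * t + v)) = 0 := by
    linear_combination e2 + (-u - 2*y - 2*y*c - x - x*c) * hst
  by_cases hz : x + y = 0
  · linear_combination hz - y * htwo
  · exfalso
    have h6 : (d * a) * (x + y) + (d * t + v) = 0 :=
      (mul_eq_zero.mp h5).resolve_left hz
    have h7 : (d * a) * (x + y) = d * t + v := by
      linear_combination h6 - (d * t + v) * htwo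
    have hrhsf : (d * t + v) ^ 2 ^ k = d * t + v := fadd _ _ (fmul _ _ hdf htf) hvf
    have hdaf : (d * a) ^ 2 ^ k = d * a := fmul _ _ hdf haSub
    have hzfix : (x + y) ^ 2 ^ k = x + y := by
      have hda0 : d * a ≠ 0 := mul_ne_zero hd0 ha0
      have : (d * a) * ((x + y) ^ 2 ^ k) = (d * a) * (x + y) := by
        calc (d * a) * ((x + y) ^ 2 ^ k) = ((d * a) * (x + y)) ^ 2 ^ k := by
              rw [mul_pow, hdaf]
          _ = (d * t + v) ^ 2 ^ k := by rw [h7]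
          _ = d * t + v := hrhsf
          _ = (d * a) * (x + y) := h7.symm
      exact mul_left_cancel₀ hda0 this
    have : relTr n k (x + y) = x + y := Aux12.T_id hodd htwo hzfix
    rw [hTxy, hst] at this
    exact hz this.symm
end
end

section
/- Let p be a prime, m, n integers both greater than 1, F : F_{p^n} → F_{p^m}, and σ : F_{p^m} → Z/p^mZ any map. Then F is 0-differential bent₂ (equivalently, perfect₂ 0-nonlinear) if and only if W_F(0) = 0, i.e., ∑_{x ∈ F_{p^n}} ζ_{p^m}^{σ(F(x))} = 0. -/
open Finset

noncomputable section

/-- `ζ_q^s` for `s ∈ Z/qZ`, computed via the integer lift of `s`. -/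
noncomputable def eCharM (q : ℕ) (s : ZMod q) : ℂ := zetaC q ^ s.val

/-- The second-kind Walsh transform
`W_H(a) = ∑_x ζ_{p^m}^{σ(H(x))}·ζ_p^{−Tr_n(a·x)}`. -/
noncomputable def Walsh2 (p n m : ℕ) [Fact p.Prime] (σ : GaloisField p m → ZMod (p ^ m))
    (H : GaloisField p n → GaloisField p m) (a : GaloisField p n) : ℂ :=
  ∑ x : GaloisField p n, eCharM (p ^ m) (σ (H x)) * eChar p (-(trAbs p n (a * x)))

/-- The second-kind `c`-crosscorrelation
`cC_{F,G}(u) = ∑_x ζ_{p^m}^{σ(F(x+u)) − σ(c·G(x))}`, the difference of exponents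
taken in `Z/p^mZ`. -/
noncomputable def crossCorr2 (p n m : ℕ) [Fact p.Prime] (σ : GaloisField p m → ZMod (p ^ m))
    (F G : GaloisField p n → GaloisField p m) (c : GaloisField p m)
    (u : GaloisField p n) : ℂ :=
  ∑ x : GaloisField p n, eCharM (p ^ m) (σ (F (x + u)) - σ (c * G x))

/-- The second-kind `c`-autocorrelation `cC_F = cC_{F,F}`. -/
noncomputable def autoCorr2 (p n m : ℕ) [Fact p.Prime] (σ : GaloisField p m → ZMod (p ^ m))
    (F : GaloisField p n → GaloisField p m) (c : GaloisField p m)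
    (u : GaloisField p n) : ℂ :=
  crossCorr2 p n m σ F F c u

/-- `F` is perfect₂ `c`-nonlinear: `cC_F(u) = 0` for all `u ≠ 0`. -/
def PerfectCNonlinear2 (p n m : ℕ) [Fact p.Prime] (σ : GaloisField p m → ZMod (p ^ m))
    (F : GaloisField p n → GaloisField p m) (c : GaloisField p m) : Prop :=
  ∀ u : GaloisField p n, u ≠ 0 → autoCorr2 p n m σ F c u = 0

/-- `F` is strictly perfect₂ `c`-nonlinear: additionally `cC_F(0) = 0`. -/
def StrictlyPerfectCNonlinear2 (p n m : ℕ) [Fact p.Prime] (σ : GaloisField p m → ZMod (p ^ m))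
    (F : GaloisField p n → GaloisField p m) (c : GaloisField p m) : Prop :=
  PerfectCNonlinear2 p n m σ F c ∧ autoCorr2 p n m σ F c 0 = 0

/-- `F` is `c`-differential bent₂: `W_F(x)·conj(W_{cF}(x)) = cC_F(0)` for all `x`,
where `cF` is the map `x ↦ c·F(x)`. -/
def CDifferentialBent2 (p n m : ℕ) [Fact p.Prime] (σ : GaloisField p m → ZMod (p ^ m))
    (F : GaloisField p n → GaloisField p m) (c : GaloisField p m) : Prop :=
  ∀ x : GaloisField p n,
    Walsh2 p n m σ F x * (starRingEnd ℂ) (Walsh2 p n m σ (fun y => c * F y) x) =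
      autoCorr2 p n m σ F c 0

/-!
For `c = 0` the map `cF` is the constant `0`, so everything is governed by the single sum
`S = W_F(0)`. Shifting the summation variable shows `cC_F(u) = ζ^{-σ(0)} S` for every `u`, while
`W_{0·F}(a) = ζ^{σ(0)} ∑_x ζ_p^{-Tr(a x)}` is `ζ^{σ(0)} p^n` at `a = 0` and vanishes elsewhere by
orthogonality of the (primitive) trace character. Hence perfect₂ `0`-nonlinearity says `S = 0`,
and the bent₂ identity is trivial away from `0` and at `0` reads `S ζ^{-σ(0)} (p^n - 1) = 0`.
-/

lemma eCharM_eq_stdAddChar (q : ℕ) [NeZero q] (s : ZMod q) :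
    eCharM q s = ZMod.stdAddChar s := by
  rw [eCharM, zetaC, ZMod.stdAddChar_apply, ZMod.toCircle_apply, ← Complex.exp_nat_mul]
  ring_nf

lemma conj_eCharM (q : ℕ) [NeZero q] (s : ZMod q) :
    starRingEnd ℂ (eCharM q s) = eCharM q (-s) := by
  rw [eCharM_eq_stdAddChar, eCharM_eq_stdAddChar,
    AddChar.starComp_apply (by rw [ZMod.ringChar_zmod_n]; exact Nat.pos_of_neZero q),
    AddChar.inv_apply]

lemma eCharM_ne_zero (q : ℕ) (s : ZMod q) : eCharM q s ≠ 0 :=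
  pow_ne_zero _ (Complex.exp_ne_zero _)

section TraceCharacter

variable (p n : ℕ) [Fact p.Prime]

def negTraceChar : AddChar (GaloisField p n) ℂ :=
  (ZMod.stdAddChar.compAddMonoidHom (Algebra.trace (ZMod p) (GaloisField p n)).toAddMonoidHom)⁻¹

lemma negTraceChar_apply (x : GaloisField p n) :
    negTraceChar p n x = eChar p (-(trAbs p n x)) := by
  rw [negTraceChar, AddChar.inv_apply, AddChar.compAddMonoidHom_apply, eChar,
    ← eCharM, eCharM_eq_stdAddChar, trAbs, LinearMap.toAddMonoidHom_coe, map_neg]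

lemma negTraceChar_ne_one : negTraceChar p n ≠ 1 := by
  obtain ⟨x, hx⟩ := Algebra.trace_surjective (ZMod p) (GaloisField p n) 1
  refine AddChar.ne_one_iff.mpr ⟨-x, fun h => one_ne_zero (α := ZMod p) ?_⟩
  rw [negTraceChar_apply, trAbs, map_neg, neg_neg, hx, eChar, ← eCharM,
    eCharM_eq_stdAddChar, ← AddChar.map_zero_eq_one (ZMod.stdAddChar (N := p))] at h
  exact ZMod.injective_stdAddChar h

open Classical in
lemma sum_eChar_neg_trAbs_mul (a : GaloisField p n) :
    ∑ x : GaloisField p n, eChar p (-(trAbs p n (a * x))) =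
      if a = 0 then (Fintype.card (GaloisField p n) : ℂ) else 0 := by
  simp_rw [← negTraceChar_apply, mul_comm a]
  exact_mod_cast AddChar.sum_mulShift a (AddChar.IsPrimitive.of_ne_one (negTraceChar_ne_one p n))

end TraceCharacter

section ZeroDifferential

variable {p n m : ℕ} [Fact p.Prime] (σ : GaloisField p m → ZMod (p ^ m))

lemma Walsh2_apply_zero (H : GaloisField p n → GaloisField p m) :
    Walsh2 p n m σ H 0 = ∑ x, eCharM (p ^ m) (σ (H x)) := by
  simp [Walsh2, trAbs, eChar]

open Classical in
lemma Walsh2_const (b : GaloisField p m) (a : GaloisField p n) :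
    Walsh2 p n m σ (fun _ => b) a =
      eCharM (p ^ m) (σ b) * if a = 0 then (Fintype.card (GaloisField p n) : ℂ) else 0 := by
  rw [Walsh2, ← sum_eChar_neg_trAbs_mul, Finset.mul_sum]

lemma autoCorr2_zero (F : GaloisField p n → GaloisField p m) (u : GaloisField p n) :
    autoCorr2 p n m σ F 0 u = eCharM (p ^ m) (-σ 0) * Walsh2 p n m σ F 0 := by
  rw [Walsh2_apply_zero, Finset.mul_sum, autoCorr2, crossCorr2]
  simp_rw [zero_mul, eCharM_eq_stdAddChar, sub_eq_add_neg, AddChar.map_add_eq_mul,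
    mul_comm _ (ZMod.stdAddChar (-σ 0))]
  exact Fintype.sum_equiv (Equiv.addRight u) _ _ fun x => rfl

variable (F : GaloisField p n → GaloisField p m)

lemma perfectCNonlinear2_zero_iff :
    PerfectCNonlinear2 p n m σ F 0 ↔ Walsh2 p n m σ F 0 = 0 := by
  simp only [PerfectCNonlinear2, autoCorr2_zero, mul_eq_zero, eCharM_ne_zero, false_or]
  exact ⟨fun h => h 1 one_ne_zero, fun h _ _ => h⟩

lemma cDifferentialBent2_zero_iff :
    CDifferentialBent2 p n m σ F 0 ↔ Walsh2 p n m σ F 0 = 0 := by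
  simp only [CDifferentialBent2, zero_mul, Walsh2_const, autoCorr2_zero]
  constructor
  · intro hB
    have h0 := hB 0
    simp only [↓reduceIte, map_mul, conj_eCharM, Complex.conj_natCast] at h0
    have hcard : (Fintype.card (GaloisField p n) : ℂ) ≠ 1 := by
      exact_mod_cast Fintype.one_lt_card.ne'
    have h : Walsh2 p n m σ F 0 * eCharM (p ^ m) (-σ 0) *
        ((Fintype.card (GaloisField p n) : ℂ) - 1) = 0 := by
      linear_combination h0
    simpa [eCharM_ne_zero, sub_eq_zero, hcard] using h
  · intro hW x
    rcases eq_or_ne x 0 with rfl | hx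
    · simp [hW]
    · simp [hx, hW]

end ZeroDifferential

theorem statement_16_general (p n m : ℕ) [Fact p.Prime]
    (F : GaloisField p n → GaloisField p m)
    (σ : GaloisField p m → ZMod (p ^ m)) :
    (CDifferentialBent2 p n m σ F 0 ↔ Walsh2 p n m σ F 0 = 0) ∧
    (PerfectCNonlinear2 p n m σ F 0 ↔ Walsh2 p n m σ F 0 = 0) ∧
    (Walsh2 p n m σ F 0 = 0 ↔
      ∑ x : GaloisField p n, eCharM (p ^ m) (σ (F x)) = 0) :=
  ⟨cDifferentialBent2_zero_iff σ F, perfectCNonlinear2_zero_iff σ F, by rw [Walsh2_apply_zero]⟩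

theorem statement_16 (p n m : ℕ) [Fact p.Prime] (hn : 1 < n) (hm : 1 < m)
    (F : GaloisField p n → GaloisField p m)
    (σ : GaloisField p m → ZMod (p ^ m)) :
    (CDifferentialBent2 p n m σ F 0 ↔ Walsh2 p n m σ F 0 = 0) ∧
    (PerfectCNonlinear2 p n m σ F 0 ↔ Walsh2 p n m σ F 0 = 0) ∧
    (Walsh2 p n m σ F 0 = 0 ↔
      ∑ x : GaloisField p n, eCharM (p ^ m) (σ (F x)) = 0) :=
  statement_16_general p n m F σ
end
end

section
/- Let p be a prime, m, n positive integers with m dividing n and m < n, and regard F_{p^m} as a subfield of F_{p^n}. Let σ : F_{p^m} → Z/p^mZ be a bijection, c ∈ F_{p^m}, and let G : F_{p^n} → F_{p^n} be PcN with respect to c. Then F : F_{p^n} → F_{p^m} defined by F(x) = Tr_{F_{p^n}/F_{p^m}}(G(x)) satisfies ∑_{x ∈ F_{p^n}} ζ_{p^m}^{σ(F(x+u) − c·F(x))} = 0 for every u ∈ F_{p^n}\{0} (the difference computed in F_{p^m}); that is, F is perfect₂ c-nonlinear (equivalently, c-differential bent₂). -/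
open Finset

noncomputable section

/-- `G : F_{p^n} → F_{p^n}` is PcN with respect to `c`: for every `a`
(with `a ≠ 0` required only when `c = 1`), `x ↦ G(x+a) − c·G(x)` is a bijection. -/
def IsPcN (p n : ℕ) [Fact p.Prime] (G : GaloisField p n → GaloisField p n)
    (c : GaloisField p n) : Prop :=
  ∀ a : GaloisField p n, (c = 1 → a ≠ 0) →
    Function.Bijective fun x => G (x + a) - c * G x

/-!
The `F_{p^m}`-linearity of the relative trace turns `F(x+u) - c·F(x)` into the trace of
`G(x+u) - c·G(x)`, which runs over all of `F_{p^n}` as `x` does because `G` is PcN. The trace is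
additive and surjective, so it takes every value of `F_{p^m}` equally often, and the sum is a
multiple of `∑_{s ∈ Z/p^mZ} ζ_{p^m}^s = 0`.
-/

theorem sum_eCharM_eq_zero {q : ℕ} [NeZero q] (hq : 1 < q) : ∑ s : ZMod q, eCharM q s = 0 := by
  rw [← (Complex.isPrimitiveRoot_exp q (NeZero.ne q)).geom_sum_eq_zero hq]
  exact Finset.sum_nbij' ZMod.val (↑) (fun s _ => Finset.mem_range.mpr s.val_lt)
    (fun _ _ => Finset.mem_univ _) (fun s _ => ZMod.natCast_zmod_val s)
    (fun i hi => ZMod.val_cast_of_lt (Finset.mem_range.mp hi)) (fun _ _ => rfl)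

/-- Every fibre of a surjective additive map is a translate of its kernel. -/
theorem Function.Surjective.sum_comp_eq_card_ker_smul {V W M F : Type*} [AddGroup V] [Fintype V]
    [AddGroup W] [Fintype W] [DecidableEq W] [AddCommMonoid M] [FunLike F V W]
    [AddMonoidHomClass F V W] {f : F} (hf : Function.Surjective f) (g : W → M) :
    ∑ v, g (f v) = #{v | f v = 0} • ∑ w, g w := by
  rw [Finset.sum_comp, Finset.image_univ_of_surjective hf, Finset.smul_sum]
  exact Finset.sum_congr rfl fun w _ => by
    rw [AddMonoidHom.card_fiber_eq_of_mem_range f (hf w) (hf 0)]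

theorem sum_comp_trace_eq_zero (K L : Type*) [Field K] [Fintype K] [Field L] [Fintype L]
    [Algebra K L] {M : Type*} [AddCommMonoid M] {ψ : K → M} (hψ : ∑ t, ψ t = 0) :
    ∑ y : L, ψ (Algebra.trace K L y) = 0 := by
  classical
  rw [(Algebra.trace_surjective K L).sum_comp_eq_card_ker_smul, hψ, smul_zero]

theorem sum_comp_trace_sub_mul_trace_eq_zero (K L : Type*) [Field K] [Fintype K] [Field L]
    [Fintype L] [Algebra K L] {M : Type*} [AddCommMonoid M] {ψ : K → M} (hψ : ∑ t, ψ t = 0)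
    (G : L → L) (c : K) (u : L)
    (hbij : Function.Bijective fun x => G (x + u) - algebraMap K L c * G x) :
    ∑ x, ψ (Algebra.trace K L (G (x + u)) - c * Algebra.trace K L (G x)) = 0 := by
  calc ∑ x, ψ (Algebra.trace K L (G (x + u)) - c * Algebra.trace K L (G x))
      = ∑ x, ψ (Algebra.trace K L (G (x + u) - algebraMap K L c * G x)) := by
        simp only [map_sub, ← Algebra.smul_def, map_smul, smul_eq_mul]
    _ = ∑ y, ψ (Algebra.trace K L y) := Fintype.sum_bijective _ hbij _ _ fun _ => rfl
    _ = 0 := sum_comp_trace_eq_zero K L hψ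

namespace GaloisField

variable (p : ℕ) [Fact p.Prime] {m n : ℕ}

theorem finrank_eq_div (hm : m ≠ 0) (hn : n ≠ 0) [Algebra (GaloisField p m) (GaloisField p n)] :
    Module.finrank (GaloisField p m) (GaloisField p n) = n / m := by
  have h := Module.card_eq_pow_finrank (K := GaloisField p m) (V := GaloisField p n)
  rw [← Nat.card_eq_fintype_card, ← Nat.card_eq_fintype_card, card p n hn, card p m hm,
    ← pow_mul] at h
  exact (Nat.div_eq_of_eq_mul_left (Nat.pos_of_ne_zero hm)
    ((Nat.pow_right_injective (Fact.out : p.Prime).two_le h).trans (mul_comm _ _))).symm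

theorem algebraMap_trace_eq_sum_pow (hm : m ≠ 0) (hn : n ≠ 0)
    [Algebra (GaloisField p m) (GaloisField p n)] (x : GaloisField p n) :
    algebraMap _ _ (Algebra.trace (GaloisField p m) (GaloisField p n) x) =
      ∑ i ∈ range (n / m), x ^ p ^ (m * i) := by
  simp only [FiniteField.algebraMap_trace_eq_sum_pow, finrank_eq_div p hm hn, card p m hm,
    pow_mul]

end GaloisField

theorem statement_18_general (p n m : ℕ) [Fact p.Prime] (hm : 0 < m) (hlt : m < n)
    (ι : GaloisField p m →+* GaloisField p n)
    (σ : GaloisField p m → ZMod (p ^ m)) (hσ : Function.Bijective σ)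
    (c : GaloisField p m)
    (G : GaloisField p n → GaloisField p n) (hG : IsPcN p n G (ι c))
    (F : GaloisField p n → GaloisField p m)
    (hF : ∀ x, ι (F x) = ∑ i ∈ Finset.range (n / m), G x ^ p ^ (m * i)) :
    ∀ u : GaloisField p n, u ≠ 0 →
      ∑ x : GaloisField p n, eCharM (p ^ m) (σ (F (x + u) - c * F x)) = 0 := by
  intro u hu
  let := ι.toAlgebra
  have hF_trace : ∀ x, F x = Algebra.trace (GaloisField p m) (GaloisField p n) (G x) := fun x =>
    ι.injective <| (hF x).trans
      (GaloisField.algebraMap_trace_eq_sum_pow p hm.ne' (by omega) (G x)).symm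
  have hψ : ∑ t, eCharM (p ^ m) (σ t) = 0 := by
    rw [Fintype.sum_bijective σ hσ _ (eCharM (p ^ m)) fun _ => rfl]
    exact sum_eCharM_eq_zero (Nat.one_lt_pow hm.ne' (Fact.out : p.Prime).one_lt)
  simp only [hF_trace]
  exact sum_comp_trace_sub_mul_trace_eq_zero _ _ hψ G c u (hG u fun _ => hu)

theorem statement_18 (p n m : ℕ) [Fact p.Prime] (hm : 0 < m) (hmn : m ∣ n) (hlt : m < n)
    (ι : GaloisField p m →+* GaloisField p n)
    (σ : GaloisField p m → ZMod (p ^ m)) (hσ : Function.Bijective σ)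
    (c : GaloisField p m)
    (G : GaloisField p n → GaloisField p n) (hG : IsPcN p n G (ι c))
    (F : GaloisField p n → GaloisField p m)
    (hF : ∀ x, ι (F x) = ∑ i ∈ Finset.range (n / m), G x ^ p ^ (m * i)) :
    ∀ u : GaloisField p n, u ≠ 0 →
      ∑ x : GaloisField p n, eCharM (p ^ m) (σ (F (x + u) - c * F x)) = 0 :=
  statement_18_general p n m hm hlt ι σ hσ c G hG F hF
end
end

section
/- Let p be a prime, m, n positive integers, F : F_{p^n} → F_{p^m}, c ∈ F_{p^m}, and σ : F_{p^m} → Z/p^mZ a bijection. For u ∈ F_{p^n} and j ∈ {0,…,p^m−1}, let S_{j,c}^u = {x ∈ F_{p^n} : σ(F(x+u) − c·F(x)) = j} (the difference computed in F_{p^m}). Then ∑_{x ∈ F_{p^n}} ζ_{p^m}^{σ(F(x+u) − c·F(x))} = 0 for all u ∈ F_{p^n}\{0} (i.e., F is perfect₂ c-nonlinear) if and only if for all u ∈ F_{p^n}\{0}, all 0 ≤ j ≤ p^{m−1}−1, and all 0 ≤ ℓ ≤ p−1, |S_{j+p^{m−1}ℓ, c}^u| = |S_{j+p^{m−1}(p−1),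 c}^u|. -/
open Finset

noncomputable section

section MyAux

open Polynomial

lemma my_sum_range_mul {M : Type*} [AddCommMonoid M] (f : ℕ → M) (r : ℕ) : ∀ t : ℕ,
    ∑ k ∈ Finset.range (r * t), f k
      = ∑ j ∈ Finset.range r, ∑ ℓ ∈ Finset.range t, f (j + r * ℓ)
  | 0 => by simp
  | (t+1) => by
    rw [Nat.mul_succ, Finset.sum_range_add, my_sum_range_mul f r t,
      ← Finset.sum_add_distrib]
    refine Finset.sum_congr rfl fun j hj => ?_
    rw [Finset.sum_range_succ, add_comm (r * t) j]

lemma my_key_forward (p m : ℕ) (hp : p.Prime) (hm : 0 < m) (A : ℕ → ℚ)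
    (h0 : ∑ k ∈ Finset.range (p ^ (m-1) * (p - 1)), (A k : ℂ) * zetaC (p ^ m) ^ k = 0) :
    ∀ k < p ^ (m-1) * (p - 1), A k = 0 := by
  have hq0 : (p : ℕ) ^ m ≠ 0 := pow_ne_zero _ hp.pos.ne'
  have hζ : IsPrimitiveRoot (zetaC (p ^ m)) (p ^ m) := by
    simpa [zetaC] using Complex.isPrimitiveRoot_exp (p ^ m) hq0
  set D := p ^ (m-1) * (p - 1) with hD
  have hDpos : 0 < D := by
    have h2 := hp.two_le
    have h1 : 0 < p - 1 := by omega
    positivity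
  set P : ℚ[X] := ∑ k ∈ Finset.range D, C (A k) * X ^ k with hP
  have haev : Polynomial.aeval (zetaC (p ^ m)) P = 0 := by
    rw [hP, map_sum, ← h0]
    refine Finset.sum_congr rfl fun k hk => ?_
    rw [map_mul, Polynomial.aeval_C, map_pow, Polynomial.aeval_X,
      eq_ratCast (algebraMap ℚ ℂ)]
  have hdvd : minpoly ℚ (zetaC (p ^ m)) ∣ P := minpoly.dvd ℚ _ haev
  have hmin : minpoly ℚ (zetaC (p ^ m)) = Polynomial.cyclotomic (p ^ m) ℚ :=
    (Polynomial.cyclotomic_eq_minpoly_rat hζ (Nat.pos_of_ne_zero hq0)).symm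
  have hdegmin : (minpoly ℚ (zetaC (p ^ m))).natDegree = D := by
    rw [hmin, Polynomial.natDegree_cyclotomic, Nat.totient_prime_pow hp hm]
  have hdegP : P.degree < (D : ℕ) := by
    rw [hP]
    refine lt_of_le_of_lt (Polynomial.degree_sum_le _ _) ?_
    rw [Finset.sup_lt_iff (by exact_mod_cast WithBot.bot_lt_coe (D : ℕ))]
    intro k hk
    refine lt_of_le_of_lt (Polynomial.degree_C_mul_X_pow_le _ _) ?_
    exact_mod_cast Finset.mem_range.mp hk
  have hP0 : P = 0 := by
    by_contra hne
    have h1 : (minpoly ℚ (zetaC (p ^ m))).natDegree ≤ P.natDegree :=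
      Polynomial.natDegree_le_of_dvd hdvd hne
    have h2 : P.natDegree < D := (Polynomial.natDegree_lt_iff_degree_lt hne).mpr hdegP
    omega
  intro k hk
  have hco : P.coeff k = A k := by
    rw [hP, Polynomial.finset_sum_coeff]
    simp only [Polynomial.coeff_C_mul, Polynomial.coeff_X_pow]
    rw [Finset.sum_eq_single k (fun b _ hb => by simp [(Ne.symm hb : k ≠ b)])
      (fun h => absurd (Finset.mem_range.mpr hk) h)]
    simp
  rw [← hco, hP0, Polynomial.coeff_zero]

lemma my_sum_eq (q : ℕ) (hq : q ≠ 0) {α : Type*} [Fintype α] (g : α → ZMod q) :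
    ∑ x : α, eCharM q (g x)
      = ∑ k ∈ Finset.range q,
          (((Finset.univ.filter fun x => g x = (k : ZMod q)).card : ℂ)) * zetaC q ^ k := by
  classical
  haveI : NeZero q := ⟨hq⟩
  rw [← Finset.sum_fiberwise Finset.univ g (fun x => eCharM q (g x))]
  have step : ∀ b : ZMod q, ∑ x ∈ Finset.univ.filter (fun x => g x = b), eCharM q (g x)
      = ((Finset.univ.filter fun x : α => g x = b).card : ℂ) * zetaC q ^ b.val := by
    intro b
    have h1 : ∀ x ∈ Finset.univ.filter (fun x : α => g x = b),
        eCharM q (g x) = zetaC q ^ b.val := fun x hx => by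
      rw [(Finset.mem_filter.mp hx).2]; rfl
    rw [Finset.sum_congr rfl h1, Finset.sum_const, nsmul_eq_mul]
  rw [Finset.sum_congr rfl fun b _ => step b]
  refine Finset.sum_nbij' (i := fun b => ZMod.val b) (j := fun k => ((k : ℕ) : ZMod q))
    ?_ ?_ ?_ ?_ ?_
  · intro b _; exact Finset.mem_range.mpr (ZMod.val_lt b)
  · intro k _; exact Finset.mem_univ _
  · intro b _; exact ZMod.natCast_rightInverse b
  · intro k hk; exact ZMod.val_cast_of_lt (Finset.mem_range.mp hk)
  · intro b _
    rw [ZMod.natCast_rightInverse b]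

end MyAux
theorem statement_19 (p n m : ℕ) [Fact p.Prime] (hn : 0 < n) (hm : 0 < m)
    (σ : GaloisField p m → ZMod (p ^ m)) (hσ : Function.Bijective σ)
    (F : GaloisField p n → GaloisField p m) (c : GaloisField p m) :
    (∀ u : GaloisField p n, u ≠ 0 →
        ∑ x : GaloisField p n, eCharM (p ^ m) (σ (F (x + u) - c * F x)) = 0) ↔
    (∀ u : GaloisField p n, u ≠ 0 → ∀ j ≤ p ^ (m - 1) - 1, ∀ ℓ ≤ p - 1,
        (Finset.univ.filter fun x : GaloisField p n =>
          σ (F (x + u) - c * F x) = ((j + p ^ (m - 1) * ℓ : ℕ) : ZMod (p ^ m))).card =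
        (Finset.univ.filter fun x : GaloisField p n =>
          σ (F (x + u) - c * F x) =
            ((j + p ^ (m - 1) * (p - 1) : ℕ) : ZMod (p ^ m))).card) := by
  classical
  have hp : p.Prime := Fact.out
  have hp2 : 2 ≤ p := hp.two_le
  have hq0 : p ^ m ≠ 0 := pow_ne_zero _ hp.pos.ne'
  have hr0 : 0 < p ^ (m - 1) := pow_pos hp.pos _
  have hq : p ^ m = p ^ (m - 1) * p := by
    rw [← pow_succ]
    congr 1
    omega
  have hζ : IsPrimitiveRoot (zetaC (p ^ m)) (p ^ m) := by
    simpa [zetaC] using Complex.isPrimitiveRoot_exp (p ^ m) hq0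
  have hη : IsPrimitiveRoot (zetaC (p ^ m) ^ p ^ (m - 1)) p :=
    hζ.pow (Nat.pos_of_ne_zero hq0) hq
  have hgeom : ∑ ℓ ∈ Finset.range p, (zetaC (p ^ m) ^ p ^ (m - 1)) ^ ℓ = 0 :=
    hη.geom_sum_eq_zero hp.one_lt
  have hZlast : (zetaC (p ^ m) ^ p ^ (m - 1)) ^ (p - 1)
      = -∑ ℓ ∈ Finset.range (p - 1), (zetaC (p ^ m) ^ p ^ (m - 1)) ^ ℓ := by
    have hsplit := hgeom
    rw [show Finset.range p = Finset.range ((p - 1) + 1) from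
        congrArg _ (by omega), Finset.sum_range_succ] at hsplit
    linear_combination hsplit
  -- the fiber counts
  set N : GaloisField p n → ℕ → ℕ := fun u k =>
    (Finset.univ.filter fun x : GaloisField p n =>
      σ (F (x + u) - c * F x) = ((k : ℕ) : ZMod (p ^ m))).card with hNdef
  have hpow : ∀ j ℓ : ℕ, zetaC (p ^ m) ^ (j + p ^ (m - 1) * ℓ)
      = zetaC (p ^ m) ^ j * (zetaC (p ^ m) ^ p ^ (m - 1)) ^ ℓ := fun j ℓ => by
    rw [pow_add, pow_mul]
  have hsum : ∀ u : GaloisField p n,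
      ∑ x : GaloisField p n, eCharM (p ^ m) (σ (F (x + u) - c * F x))
        = ∑ j ∈ Finset.range (p ^ (m - 1)), ∑ ℓ ∈ Finset.range p,
            (N u (j + p ^ (m - 1) * ℓ) : ℂ) * zetaC (p ^ m) ^ (j + p ^ (m - 1) * ℓ) := by
    intro u
    rw [my_sum_eq (p ^ m) hq0 (fun x => σ (F (x + u) - c * F x)),
      show Finset.range (p ^ m) = Finset.range (p ^ (m - 1) * p) from congrArg _ hq]
    exact my_sum_range_mul (fun k => (N u k : ℂ) * zetaC (p ^ m) ^ k) (p ^ (m - 1)) p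
  have hjsum : ∀ (u : GaloisField p n) (j : ℕ),
      ∑ ℓ ∈ Finset.range p,
          (N u (j + p ^ (m - 1) * ℓ) : ℂ) * zetaC (p ^ m) ^ (j + p ^ (m - 1) * ℓ)
        = ∑ ℓ ∈ Finset.range (p - 1),
            ((N u (j + p ^ (m - 1) * ℓ) : ℂ) - (N u (j + p ^ (m - 1) * (p - 1)) : ℂ))
              * zetaC (p ^ m) ^ (j + p ^ (m - 1) * ℓ) := by
    intro u j
    rw [show Finset.range p = Finset.range ((p - 1) + 1) from congrArg _ (by omega),
      Finset.sum_range_succ]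
    simp only [sub_mul, Finset.sum_sub_distrib]
    rw [sub_eq_add_neg]
    congr 1
    rw [hpow j (p - 1), hZlast]
    simp only [hpow, mul_neg, Finset.mul_sum, neg_inj]
    try refine Finset.sum_congr rfl fun ℓ _ => by ring
  constructor
  · -- forward
    intro h u hu j hj ℓ hℓ
    have hjr : j < p ^ (m - 1) := by omega
    by_cases hcase : ℓ = p - 1
    · rw [hcase]
    have hℓ' : ℓ < p - 1 := by
      rcases lt_or_eq_of_le hℓ with h' | h'
      · exact h'
      · exact absurd h' hcase
    have h0 : ∑ k ∈ Finset.range (p ^ (m - 1) * (p - 1)),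
        (((N u k : ℚ) - (N u (k % p ^ (m - 1) + p ^ (m - 1) * (p - 1)) : ℚ) : ℚ) : ℂ)
          * zetaC (p ^ m) ^ k = 0 := by
      rw [my_sum_range_mul (fun k =>
        ((((N u k : ℚ) - (N u (k % p ^ (m - 1) + p ^ (m - 1) * (p - 1)) : ℚ)) : ℚ) : ℂ)
          * zetaC (p ^ m) ^ k) (p ^ (m - 1)) (p - 1)]
      have hmod : ∀ j' ∈ Finset.range (p ^ (m - 1)), ∀ ℓ' ∈ Finset.range (p - 1),
          ((((N u (j' + p ^ (m - 1) * ℓ') : ℚ)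
            - (N u ((j' + p ^ (m - 1) * ℓ') % p ^ (m - 1) + p ^ (m - 1) * (p - 1)) : ℚ)) : ℚ) : ℂ)
              * zetaC (p ^ m) ^ (j' + p ^ (m - 1) * ℓ')
          = ((N u (j' + p ^ (m - 1) * ℓ') : ℂ) - (N u (j' + p ^ (m - 1) * (p - 1)) : ℂ))
              * zetaC (p ^ m) ^ (j' + p ^ (m - 1) * ℓ') := by
        intro j' hj' ℓ' _
        have : (j' + p ^ (m - 1) * ℓ') % p ^ (m - 1) = j' := by
          rw [Nat.add_mul_mod_self_left, Nat.mod_eq_of_lt (Finset.mem_range.mp hj')]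
        rw [this]
        push_cast
        ring
      rw [Finset.sum_congr rfl fun j' hj' => Finset.sum_congr rfl fun ℓ' hℓ' =>
        hmod j' hj' ℓ' hℓ']
      rw [Finset.sum_congr rfl fun j' _ => (hjsum u j').symm, ← hsum u]
      exact h u hu
    have hkey := my_key_forward p m hp hm
      (fun k => (N u k : ℚ) - (N u (k % p ^ (m - 1) + p ^ (m - 1) * (p - 1)) : ℚ)) h0
    have hklt : j + p ^ (m - 1) * ℓ < p ^ (m - 1) * (p - 1) := by
      calc j + p ^ (m - 1) * ℓ < p ^ (m - 1) + p ^ (m - 1) * ℓ := by omega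
        _ = p ^ (m - 1) * (ℓ + 1) := by ring
        _ ≤ p ^ (m - 1) * (p - 1) := Nat.mul_le_mul_left _ (by omega)
    have hmod : (j + p ^ (m - 1) * ℓ) % p ^ (m - 1) = j := by
      rw [Nat.add_mul_mod_self_left, Nat.mod_eq_of_lt hjr]
    have hA : (N u (j + p ^ (m - 1) * ℓ) : ℚ)
        - (N u ((j + p ^ (m - 1) * ℓ) % p ^ (m - 1) + p ^ (m - 1) * (p - 1)) : ℚ) = 0 :=
      hkey _ hklt
    rw [hmod, sub_eq_zero] at hA
    exact_mod_cast hA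
  · -- backward
    intro h u hu
    rw [hsum u]
    refine Finset.sum_eq_zero fun j hj => ?_
    have hj' : j < p ^ (m - 1) := Finset.mem_range.mp hj
    have hcongr : ∀ ℓ' ∈ Finset.range p,
        (N u (j + p ^ (m - 1) * ℓ') : ℂ) * zetaC (p ^ m) ^ (j + p ^ (m - 1) * ℓ')
          = ((N u (j + p ^ (m - 1) * (p - 1)) : ℂ) * zetaC (p ^ m) ^ j)
              * (zetaC (p ^ m) ^ p ^ (m - 1)) ^ ℓ' := by
      intro ℓ' hℓ'
      have hℓp : ℓ' < p := Finset.mem_range.mp hℓ'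
      have hNeq : N u (j + p ^ (m - 1) * ℓ') = N u (j + p ^ (m - 1) * (p - 1)) :=
        h u hu j (by omega) ℓ' (by omega)
      rw [hNeq, hpow]
      ring
    rw [Finset.sum_congr rfl hcongr, ← Finset.mul_sum, hgeom, mul_zero]
end
end
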